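/- arXiv:1906.06552 — 3 statements merged into one kernel-verified Lean document; each statement's English description precedes it below -/
import Mathlib

section
/- Suppose {v_n}_{n≥0} is a Riesz basis of a separable real Hilbert space H and {ṽ_n}_{n≥0} is a sequence in H with Σ_{n≥0} ‖v_n − ṽ_n‖² < ε for sufficiently small ε > 0 (depending on the basis constants of {v_n}) and {ṽ_n} is complete in H. Then {ṽ_n}_{n≥0} is also a Riesz basis of H. -/
open Real MeasureTheory

/-- A Riesz basis of a Hilbert space: the image of an orthonormal (Hilbert) basis
under a bounded invertible linear operator. -/
def IsRieszBasis {H : Type*} [NormedAddCommGroup H] [InnerProductSpace ℝ H]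
    (v : ℕ → H) : Prop :=
  ∃ (e : HilbertBasis ℕ ℝ H) (T : H ≃L[ℝ] H), ∀ n, v n = T (e n)

/-!
Write `w n = v n - d n` with `v n = T (e n)` for a Hilbert basis `e`. Since `d` is square-summable,
`S x = ∑ ⟪e n, x⟫ • d n` is a bounded operator with `S (e n) = d n` and, by Bessel and
Cauchy–Schwarz, `‖S‖ ≤ (∑ ‖d n‖²)^½`. Then `w n = (T - S) (e n)`, and `T - S` stays invertible
as long as `‖T⁻¹‖ ‖S‖ < 1`, which holds once `∑ ‖d n‖²` is small.
-/

theorem summable_mul_and_tsum_mul_le_sqrt_mul_sqrt {ι : Type*} {f g : ι → ℝ}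
    (hf : ∀ i, 0 ≤ f i) (hg : ∀ i, 0 ≤ g i)
    (hf_sum : Summable fun i => f i ^ 2) (hg_sum : Summable fun i => g i ^ 2) :
    Summable (fun i => f i * g i) ∧
      ∑' i, f i * g i ≤ √(∑' i, f i ^ 2) * √(∑' i, g i ^ 2) := by
  have h := Real.summable_and_inner_le_Lp_mul_Lq_tsum_of_nonneg Real.HolderConjugate.two_two
    hf hg (by simpa only [Real.rpow_two] using hf_sum) (by simpa only [Real.rpow_two] using hg_sum)
  simpa only [Real.rpow_two, Real.sqrt_eq_rpow, one_div] using h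

namespace Orthonormal

variable {ι 𝕜 E F : Type*} [RCLike 𝕜] [NormedAddCommGroup E] [InnerProductSpace 𝕜 E]
  [NormedAddCommGroup F] [NormedSpace 𝕜 F] {e : ι → E} {d : ι → F}

theorem summable_norm_inner_smul_and_tsum_le (he : Orthonormal 𝕜 e)
    (hd : Summable fun i => ‖d i‖ ^ 2) (x : E) :
    Summable (fun i => ‖inner 𝕜 (e i) x • d i‖) ∧
      ∑' i, ‖inner 𝕜 (e i) x • d i‖ ≤ √(∑' i, ‖d i‖ ^ 2) * ‖x‖ := by
  simp only [norm_smul]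
  obtain ⟨hsum, hle⟩ := summable_mul_and_tsum_mul_le_sqrt_mul_sqrt (fun i => norm_nonneg _)
    (fun i => norm_nonneg _) (he.inner_products_summable x) hd
  have hbessel : √(∑' i, ‖inner 𝕜 (e i) x‖ ^ 2) ≤ ‖x‖ :=
    Real.sqrt_le_sqrt (he.tsum_inner_products_le x) |>.trans_eq (Real.sqrt_sq (norm_nonneg x))
  refine ⟨hsum, hle.trans ?_⟩
  rw [mul_comm]
  gcongr

variable [CompleteSpace F]

theorem exists_clm_apply_eq (he : Orthonormal 𝕜 e) (hd : Summable fun i => ‖d i‖ ^ 2) :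
    ∃ S : E →L[𝕜] F, ‖S‖ ≤ √(∑' i, ‖d i‖ ^ 2) ∧ ∀ i, S (e i) = d i := by
  have habs := he.summable_norm_inner_smul_and_tsum_le hd
  have hsum (x : E) : Summable fun i => inner 𝕜 (e i) x • d i := (habs x).1.of_norm
  have hbound (x : E) : ‖∑' i, inner 𝕜 (e i) x • d i‖ ≤ √(∑' i, ‖d i‖ ^ 2) * ‖x‖ :=
    (norm_tsum_le_tsum_norm (habs x).1).trans (habs x).2
  let S₀ : E →ₗ[𝕜] F :=
    { toFun := fun x => ∑' i, inner 𝕜 (e i) x • d i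
      map_add' := fun x y => by
        simp only [inner_add_right, add_smul]
        exact (hsum x).tsum_add (hsum y)
      map_smul' := fun c x => by
        simp only [inner_smul_right, mul_smul, RingHom.id_apply]
        exact (hsum x).tsum_const_smul c }
  refine ⟨S₀.mkContinuous _ hbound, S₀.mkContinuous_norm_le (Real.sqrt_nonneg _) hbound,
    fun i => ?_⟩
  change ∑' j, inner 𝕜 (e j) (e i) • d j = d i
  rw [tsum_eq_single i fun j hj => by simp [he.inner_eq_zero hj]]
  simp [he.1 i]

end Orthonormal

theorem ContinuousLinearEquiv.exists_apply_eq_sub_of_norm_mul_lt_one {𝕜 E F : Type*}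
    [NontriviallyNormedField 𝕜] [NormedAddCommGroup E] [NormedSpace 𝕜 E] [CompleteSpace E]
    [NormedAddCommGroup F] [NormedSpace 𝕜 F] (T : E ≃L[𝕜] F) (S : E →L[𝕜] F)
    (h : ‖(T.symm : F →L[𝕜] E)‖ * ‖S‖ < 1) :
    ∃ U : E ≃L[𝕜] F, ∀ x, U x = T x - S x := by
  set A : E →L[𝕜] E := (T.symm : F →L[𝕜] E) ∘L S
  have hA : ‖A‖ < 1 := (ContinuousLinearMap.opNorm_comp_le _ _).trans_lt h
  refine ⟨(ContinuousLinearEquiv.unitsEquiv 𝕜 E (Units.oneSub A hA)).trans T, fun x => ?_⟩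
  simp [A]

theorem riesz_basis_stability_general {H : Type*} [NormedAddCommGroup H] [InnerProductSpace ℝ H]
    [CompleteSpace H] (v : ℕ → H) (hv : IsRieszBasis v) :
    ∃ ε > (0:ℝ), ∀ w : ℕ → H,
      Summable (fun n : ℕ => ‖v n - w n‖^2) →
      (∑' n : ℕ, ‖v n - w n‖^2) < ε →
      (Submodule.span ℝ (Set.range w)).topologicalClosure = ⊤ →
      IsRieszBasis w := by
  obtain ⟨e, T, hvT⟩ := hv
  set M := ‖(T.symm : H →L[ℝ] H)‖
  refine ⟨(1 + M)⁻¹ ^ 2, by positivity, fun w hsum hlt _ => ?_⟩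
  obtain ⟨S, hS, hSe⟩ := e.orthonormal.exists_clm_apply_eq hsum
  have hroot : √(∑' n, ‖v n - w n‖ ^ 2) < (1 + M)⁻¹ := (Real.sqrt_lt' (by positivity)).2 hlt
  have hsmall : M * ‖S‖ < 1 :=
    calc M * ‖S‖ ≤ M * (1 + M)⁻¹ := by gcongr; exact hS.trans hroot.le
      _ < 1 := by rw [mul_inv_lt_iff₀ (by positivity)]; linarith
  obtain ⟨U, hU⟩ := T.exists_apply_eq_sub_of_norm_mul_lt_one S hsmall
  exact ⟨e, U, fun n => by rw [hU, hSe, ← hvT, sub_sub_cancel]⟩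

theorem riesz_basis_stability {H : Type*} [NormedAddCommGroup H] [InnerProductSpace ℝ H]
    [CompleteSpace H] [TopologicalSpace.SeparableSpace H] (v : ℕ → H) (hv : IsRieszBasis v) :
    ∃ ε > (0:ℝ), ∀ w : ℕ → H,
      Summable (fun n : ℕ => ‖v n - w n‖^2) →
      (∑' n : ℕ, ‖v n - w n‖^2) < ε →
      (Submodule.span ℝ (Set.range w)).topologicalClosure = ⊤ →
      IsRieszBasis w :=
  riesz_basis_stability_general v hv
end

section
/- The functions sin((2k+1)πx), k ≥ 0, form a complete orthogonal system in L²(0, 1/2): they are pairwise orthogonal, each has norm 1/2, and if f ∈ L²(0,1/2) satisfies ∫₀^{1/2} f(x) sin((2k+1)πx) dx = 0 for all k ≥ 0, then f = 0 almost everywhere. -/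
/-!
Orthogonality and the norms follow from `2 sin a sin b = cos (a - b) - cos (a + b)` and
`∫₀^{1/2} cos (2mπx) dx = 0` for `m ≠ 0`.

For completeness, `2 cos (2πx) sin ((2k+1)πx) = sin ((2k+3)πx) + sin ((2k-1)πx)` shows that the
span of the odd sines is stable under multiplication by `cos (2πx)`, so it contains
`sin (πx) p (cos (2πx))` for every polynomial `p`. As `cos (2πx)` is injective on `[0, 1/2]`,
Stone–Weierstrass makes these functions uniformly dense in `sin (πx) · C[0, 1/2]`. Hence
`f sin (πx)` integrates to zero against every continuous function, so it vanishes a.e., and so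
does `f` because `sin (πx) > 0` on `(0, 1/2)`.
-/

open MeasureTheory Real Set Polynomial

theorem integral_cos_two_mul_int_mul_pi (m : ℤ) :
    ∫ x in (0:ℝ)..1/2, cos (2 * m * π * x) = if m = 0 then 1/2 else 0 := by
  split_ifs with hm
  · simp [hm]
  · have hc : (2 * m * π : ℝ) ≠ 0 := by simp [hm, pi_ne_zero]
    rw [intervalIntegral.integral_comp_mul_left (fun x => cos x) hc, integral_cos,
      show 2 * (m : ℝ) * π * (1/2) = m * π by ring, sin_int_mul_pi]
    simp

theorem integral_sin_odd_mul_sin_odd (j k : ℕ) :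
    ∫ x in Ioo (0:ℝ) (1/2), sin ((2 * j + 1) * π * x) * sin ((2 * k + 1) * π * x) =
      if j = k then 1/4 else 0 := by
  have hprod : ∀ x : ℝ, sin ((2 * j + 1) * π * x) * sin ((2 * k + 1) * π * x) =
      cos (2 * ((j - k : ℤ) : ℝ) * π * x) / 2 - cos (2 * ((j + k + 1 : ℤ) : ℝ) * π * x) / 2 := by
    intro x
    push_cast
    rw [show 2 * ((j : ℝ) - k) * π * x = (2 * j + 1) * π * x - (2 * k + 1) * π * x by ring,
      show 2 * ((j : ℝ) + k + 1) * π * x = (2 * j + 1) * π * x + (2 * k + 1) * π * x by ring,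
      cos_sub, cos_add]
    ring
  rw [← integral_Ioc_eq_integral_Ioo, ← intervalIntegral.integral_of_le (by norm_num)]
  simp_rw [hprod]
  rw [intervalIntegral.integral_sub ((by fun_prop : Continuous _).intervalIntegrable _ _)
      ((by fun_prop : Continuous _).intervalIntegrable _ _),
    intervalIntegral.integral_div, intervalIntegral.integral_div, integral_cos_two_mul_int_mul_pi,
    integral_cos_two_mul_int_mul_pi, if_neg (show (j + k + 1 : ℤ) ≠ 0 by omega)]
  simp only [sub_eq_zero, Nat.cast_inj]
  split_ifs <;> norm_num

theorem exists_polynomial_near_comp_of_injOn {α : Type*} [TopologicalSpace α] {K : Set α}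
    (hK : IsCompact K) {u G : α → ℝ} (hu : ContinuousOn u K) (hinj : InjOn u K)
    (hG : ContinuousOn G K) {ε : ℝ} (hε : 0 < ε) :
    ∃ p : ℝ[X], ∀ x ∈ K, |G x - p.eval (u x)| < ε := by
  have : CompactSpace K := isCompact_iff_compactSpace.mp hK
  let uK : C(K, ℝ) := ⟨K.domRestrict u, hu.domRestrict⟩
  have hsep : (Algebra.adjoin ℝ {uK}).SeparatesPoints := fun x y hxy =>
    ⟨uK, ⟨uK, Algebra.subset_adjoin rfl, rfl⟩, fun h => hxy (Subtype.ext (hinj x.2 y.2 h))⟩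
  obtain ⟨⟨g, hgA⟩, hg⟩ := ContinuousMap.exists_mem_subalgebra_near_continuous_of_separatesPoints
    _ hsep (K.domRestrict G) hG.domRestrict ε hε
  rw [Algebra.adjoin_singleton_eq_range_aeval] at hgA
  obtain ⟨p, rfl⟩ := hgA
  refine ⟨p, fun x hx => ?_⟩
  rw [abs_sub_comm]
  simpa [uK, Polynomial.aeval_continuousMap_apply, Set.domRestrict_apply] using hg ⟨x, hx⟩

theorem integral_mul_eq_zero_of_forall_near {α : Type*} [MeasurableSpace α] {μ : Measure α}
    {h G : α → ℝ} (hh : Integrable h μ) (hhG : Integrable (fun x => h x * G x) μ)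
    (happrox : ∀ ε > 0, ∃ P : α → ℝ, Integrable (fun x => h x * P x) μ ∧
      ∫ x, h x * P x ∂μ = 0 ∧ ∀ᵐ x ∂μ, |G x - P x| ≤ ε) :
    ∫ x, h x * G x ∂μ = 0 := by
  refine eq_of_forall_dist_le fun ε hε => ?_
  set B := ∫ x, ‖h x‖ ∂μ
  have hB : 0 ≤ B := integral_nonneg fun x => norm_nonneg _
  obtain ⟨P, hhP, hP, hGP⟩ := happrox (ε / (B + 1)) (by positivity)
  calc dist (∫ x, h x * G x ∂μ) 0
      = ‖∫ x, h x * (G x - P x) ∂μ‖ := by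
        simp_rw [mul_sub]
        rw [integral_sub hhG hhP, hP, sub_zero, dist_zero_right]
    _ ≤ ∫ x, ‖h x‖ * (ε / (B + 1)) ∂μ := by
        refine norm_integral_le_of_norm_le (hh.norm.mul_const _) ?_
        filter_upwards [hGP] with x hx
        rw [norm_mul, Real.norm_eq_abs (G x - P x)]
        exact mul_le_mul_of_nonneg_left hx (norm_nonneg _)
    _ = B * ε / (B + 1) := by rw [integral_mul_const]; ring
    _ ≤ ε := by rw [div_le_iff₀ (by positivity)]; nlinarith

theorem integral_mul_eq_zero_of_mem_span {α : Type*} [MeasurableSpace α] {μ : Measure α}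
    {f : α → ℝ} {S : Set (α → ℝ)}
    (hS : ∀ g ∈ S, Integrable (fun x => f x * g x) μ ∧ ∫ x, f x * g x ∂μ = 0) {g : α → ℝ}
    (hg : g ∈ Submodule.span ℝ S) : ∫ x, f x * g x ∂μ = 0 := by
  suffices Integrable (fun x => f x * g x) μ ∧ ∫ x, f x * g x ∂μ = 0 from this.2
  induction hg using Submodule.span_induction with
  | mem g hg => exact hS g hg
  | zero => simp
  | add g₁ g₂ _ _ h₁ h₂ =>
    simp only [Pi.add_apply, mul_add]
    exact ⟨h₁.1.add h₂.1, by rw [integral_add h₁.1 h₂.1, h₁.2, h₂.2, add_zero]⟩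
  | smul a g _ hg =>
    simp only [Pi.smul_apply, smul_eq_mul, mul_left_comm _ a]
    exact ⟨hg.1.const_mul a, by rw [integral_const_mul, hg.2, mul_zero]⟩

def oddSineSpan : Submodule ℝ (ℝ → ℝ) :=
  Submodule.span ℝ (range fun k : ℕ => fun x => sin ((2 * k + 1) * π * x))

theorem sin_odd_mem_oddSineSpan (k : ℕ) :
    (fun x => sin ((2 * k + 1) * π * x)) ∈ oddSineSpan :=
  Submodule.subset_span (mem_range_self k)

theorem cos_mul_sin_odd_mem_oddSineSpan (k : ℕ) :
    (fun x => cos (2 * π * x)) * (fun x => sin ((2 * k + 1) * π * x)) ∈ oddSineSpan := by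
  have hsum : (fun x => cos (2 * π * x)) * (fun x => sin ((2 * k + 1) * π * x)) =
      (1/2 : ℝ) • (fun x => sin ((2 * (k + 1 : ℕ) + 1) * π * x)) +
        (1/2 : ℝ) • (fun x => sin ((2 * k - 1) * π * x)) := by
    funext x
    simp only [Pi.mul_apply, Pi.add_apply, Pi.smul_apply, smul_eq_mul]
    push_cast
    rw [show (2 * ((k : ℝ) + 1) + 1) * π * x = (2 * k + 1) * π * x + 2 * π * x by ring,
      show (2 * (k : ℝ) - 1) * π * x = (2 * k + 1) * π * x - 2 * π * x by ring, sin_add, sin_sub]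
    ring
  rw [hsum]
  refine add_mem (Submodule.smul_mem _ _ (sin_odd_mem_oddSineSpan _)) (Submodule.smul_mem _ _ ?_)
  cases k with
  | zero =>
    convert neg_mem (sin_odd_mem_oddSineSpan 0) using 1
    funext x
    simp [neg_mul, ← sin_neg]
  | succ k =>
    convert sin_odd_mem_oddSineSpan k using 3
    push_cast
    ring

theorem cos_mul_mem_oddSineSpan {g : ℝ → ℝ} (hg : g ∈ oddSineSpan) :
    (fun x => cos (2 * π * x)) * g ∈ oddSineSpan := by
  have : oddSineSpan ≤ oddSineSpan.comap (LinearMap.mulLeft ℝ fun x => cos (2 * π * x)) :=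
    Submodule.span_le.2 (by rintro _ ⟨k, rfl⟩; exact cos_mul_sin_odd_mem_oddSineSpan k)
  exact this hg

theorem sin_mul_eval_cos_mem_oddSineSpan (p : ℝ[X]) :
    (fun x => sin (π * x) * p.eval (cos (2 * π * x))) ∈ oddSineSpan := by
  induction p using Polynomial.induction_on with
  | C a =>
    convert Submodule.smul_mem _ a (sin_odd_mem_oddSineSpan 0) using 1
    funext x
    simp [mul_comm]
  | add p q hp hq =>
    simp only [eval_add, mul_add]
    exact add_mem hp hq
  | monomial n a hp =>
    convert cos_mul_mem_oddSineSpan hp using 1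
    funext x
    simp only [eval_mul, eval_C, eval_pow, eval_X, Pi.mul_apply]
    ring

theorem injOn_cos_two_pi_mul : InjOn (fun x => cos (2 * π * x)) (Icc 0 (1/2)) := by
  refine injOn_cos.comp (mul_right_injective₀ (by positivity)).injOn fun x hx => ?_
  constructor <;> nlinarith [hx.1, hx.2, pi_pos]

theorem ae_eq_zero_of_integral_mul_sin_odd_eq_zero {f : ℝ → ℝ}
    (hf : IntegrableOn f (Ioo 0 (1/2)))
    (horth : ∀ k : ℕ, ∫ x in Ioo (0:ℝ) (1/2), f x * sin ((2 * k + 1) * π * x) = 0) :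
    f =ᵐ[volume.restrict (Ioo 0 (1/2))] 0 := by
  have hint : ∀ g : ℝ → ℝ, Continuous g → IntegrableOn (fun x => f x * g x) (Ioo 0 (1/2)) :=
    fun g hg => hf.mul_continuousOn_of_subset hg.continuousOn measurableSet_Ioo isCompact_Icc
      Ioo_subset_Icc_self
  have hspan : ∀ g ∈ oddSineSpan, ∫ x in Ioo (0:ℝ) (1/2), f x * g x = 0 :=
    fun g => integral_mul_eq_zero_of_mem_span <| by
      rintro _ ⟨k, rfl⟩
      exact ⟨hint _ (by fun_prop), horth k⟩
  have hsin : ∀ G : ℝ → ℝ, Continuous G →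
      ∫ x in Ioo (0:ℝ) (1/2), f x * (sin (π * x) * G x) = 0 := by
    intro G hG
    refine integral_mul_eq_zero_of_forall_near hf (hint _ (by fun_prop)) fun ε hε => ?_
    obtain ⟨p, hp⟩ := exists_polynomial_near_comp_of_injOn isCompact_Icc (by fun_prop)
      injOn_cos_two_pi_mul hG.continuousOn hε
    refine ⟨_, hint _ (by fun_prop), hspan _ (sin_mul_eval_cos_mem_oddSineSpan p), ?_⟩
    filter_upwards [ae_restrict_mem measurableSet_Ioo] with x hx
    rw [← mul_sub, abs_mul]
    exact (mul_le_of_le_one_left (abs_nonneg _) (abs_sin_le_one _)).trans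
      (hp x (Ioo_subset_Icc_self hx)).le
  have hfsin : ∀ᵐ x ∂volume.restrict (Ioo 0 (1/2)), f x * sin (π * x) = 0 := by
    refine ae_eq_zero_of_integral_contDiff_smul_eq_zero (hint _ (by fun_prop)).locallyIntegrable
      fun G hG _ => ?_
    refine (integral_congr_ae (ae_of_all _ fun x => ?_)).trans (hsin G hG.continuous)
    rw [smul_eq_mul]
    ring
  filter_upwards [hfsin, ae_restrict_mem measurableSet_Ioo] with x hx hxs
  have : 0 < sin (π * x) := sin_pos_of_pos_of_lt_pi (by nlinarith [hxs.1, pi_pos])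
    (by nlinarith [hxs.2, pi_pos])
  exact (mul_eq_zero.mp hx).resolve_right this.ne'

theorem sin_complete_orthogonal_system :
    (∀ j k : ℕ, j ≠ k →
      ∫ x in Set.Ioo (0:ℝ) (1/2),
        Real.sin ((2 * j + 1) * Real.pi * x) * Real.sin ((2 * k + 1) * Real.pi * x) = 0) ∧
    (∀ k : ℕ, (∫ x in Set.Ioo (0:ℝ) (1/2),
        Real.sin ((2 * k + 1) * Real.pi * x) ^ 2) = (1/2 : ℝ)^2) ∧
    (∀ f : ℝ → ℝ, MemLp f 2 (volume.restrict (Set.Ioo (0:ℝ) (1/2))) →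
      (∀ k : ℕ, ∫ x in Set.Ioo (0:ℝ) (1/2), f x * Real.sin ((2 * k + 1) * Real.pi * x) = 0) →
      f =ᵐ[volume.restrict (Set.Ioo (0:ℝ) (1/2))] 0) := by
  refine ⟨fun j k hjk => ?_, fun k => ?_, fun f hf horth => ?_⟩
  · rw [integral_sin_odd_mul_sin_odd, if_neg hjk]
  · simp_rw [sq, integral_sin_odd_mul_sin_odd]
    norm_num
  · exact ae_eq_zero_of_integral_mul_sin_odd_eq_zero (hf.integrable one_le_two) horth
end

section
/- Let H be a Hilbert space, {v_n}_{n≥0} a Riesz basis of H with biorthogonal basis {v_n*}, and {ṽ_n}_{n≥0} another Riesz basis of H with biorthogonal basis {ṽ_n*}. Suppose K, K̃ ∈ H satisfy ⟨K, v_n⟩ = f_n and ⟨K̃, ṽ_n⟩ = f̃_n for all n, with {f_n}, {f̃_n} ∈ l². Then ‖K − K̃‖ ≤ C (Σ_n ‖v_n − ṽ_n‖²)^{1/2} + C (Σ_n |f_n − f̃_n|²)^{1/2}, where C depends only on the Riesz basis bounds of {v_n} and {ṽ_n} and on ‖K‖. -/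
/-!
Write `w n = S (e n)` with `e` a Hilbert basis. Then `⟪x, w n⟫ = ⟪S† x, e n⟫`, so by Parseval the
`ℓ²` norm of `(⟪x, w n⟫)ₙ` is `‖S† x‖`, and since `S†` is invertible, `‖x‖ ≤ C ‖(⟪x, w n⟫)ₙ‖₂`.
Apply this to `x = K - Kt` and split `⟪K - Kt, w n⟫ = (⟪K, v n⟫ - ⟪Kt, w n⟫) - ⟪K, v n - w n⟫`:
by Cauchy–Schwarz the second sequence has `ℓ²` norm at most `‖K‖ (∑ ‖v n - w n‖²)^{1/2}`, and
Minkowski's inequality finishes the proof.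
-/

open scoped RealInnerProductSpace

section L2

variable {ι : Type*} {f g : ι → ℝ}

theorem Real.L2_add_le_tsum (hf : Summable fun i => f i ^ 2)
    (hg : Summable fun i => g i ^ 2) :
    (Summable fun i => (f i + g i) ^ 2) ∧
      (∑' i, (f i + g i) ^ 2) ^ (1 / 2 : ℝ) ≤
        (∑' i, f i ^ 2) ^ (1 / 2 : ℝ) + (∑' i, g i ^ 2) ^ (1 / 2 : ℝ) := by
  have habs_sq : ∀ h : ι → ℝ, (fun i => |h i| ^ (2 : ℝ)) = fun i => h i ^ 2 := fun h => by
    ext i; rw [Real.rpow_two, sq_abs]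
  obtain ⟨hsum, hle⟩ := Real.Lp_add_le_tsum_of_nonneg (p := 2) one_le_two
    (fun i => abs_nonneg (f i)) (fun i => abs_nonneg (g i))
    (by rwa [habs_sq]) (by rwa [habs_sq])
  simp only [Real.rpow_two, sq_abs] at hsum hle
  have hpoint : ∀ i, (f i + g i) ^ 2 ≤ (|f i| + |g i|) ^ 2 := fun i =>
    sq_le_sq' (by linarith [neg_abs_le (f i), neg_abs_le (g i)])
      (add_le_add (le_abs_self _) (le_abs_self _))
  have hsum' : Summable fun i => (f i + g i) ^ 2 :=
    hsum.of_nonneg_of_le (fun i => sq_nonneg _) hpoint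
  refine ⟨hsum', le_trans ?_ hle⟩
  exact Real.rpow_le_rpow (tsum_nonneg fun i => sq_nonneg _)
    (hsum'.tsum_le_tsum hpoint hsum) (by norm_num)

theorem Real.L2_le_L2_add_L2_add (hf : Summable fun i => f i ^ 2)
    (hg : Summable fun i => g i ^ 2) :
    (∑' i, f i ^ 2) ^ (1 / 2 : ℝ) ≤
      (∑' i, g i ^ 2) ^ (1 / 2 : ℝ) + (∑' i, (f i + g i) ^ 2) ^ (1 / 2 : ℝ) := by
  have hneg : Summable fun i => (-g i) ^ 2 := by simpa only [neg_sq] using hg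
  obtain ⟨hfg, -⟩ := Real.L2_add_le_tsum hf hg
  have := (Real.L2_add_le_tsum hfg hneg).2
  simp only [add_neg_cancel_right, neg_sq] at this
  linarith

end L2

theorem L2_inner_le_norm_mul_L2 {E ι : Type*} [NormedAddCommGroup E]
    [InnerProductSpace ℝ E] (x : E) {u : ι → E} (hu : Summable fun i => ‖u i‖ ^ 2) :
    (Summable fun i => ⟪x, u i⟫ ^ 2) ∧
      (∑' i, ⟪x, u i⟫ ^ 2) ^ (1 / 2 : ℝ) ≤ ‖x‖ * (∑' i, ‖u i‖ ^ 2) ^ (1 / 2 : ℝ) := by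
  have hpoint : ∀ i, ⟪x, u i⟫ ^ 2 ≤ ‖x‖ ^ 2 * ‖u i‖ ^ 2 := fun i => by
    rw [← mul_pow, ← sq_abs]
    exact pow_le_pow_left₀ (abs_nonneg _) (abs_real_inner_le_norm x (u i)) 2
  have hsum := (hu.mul_left (‖x‖ ^ 2)).of_nonneg_of_le (fun i => sq_nonneg _) hpoint
  refine ⟨hsum, ?_⟩
  calc (∑' i, ⟪x, u i⟫ ^ 2) ^ (1 / 2 : ℝ)
      ≤ (‖x‖ ^ 2 * ∑' i, ‖u i‖ ^ 2) ^ (1 / 2 : ℝ) := by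
        rw [← tsum_mul_left]
        exact Real.rpow_le_rpow (tsum_nonneg fun i => sq_nonneg _)
          (hsum.tsum_le_tsum hpoint (hu.mul_left _)) (by norm_num)
    _ = ‖x‖ * (∑' i, ‖u i‖ ^ 2) ^ (1 / 2 : ℝ) := by
        rw [Real.mul_rpow (by positivity) (tsum_nonneg fun i => by positivity),
          ← Real.sqrt_eq_rpow, Real.sqrt_sq (norm_nonneg x)]

theorem HilbertBasis.hasSum_inner_sq {E ι : Type*} [NormedAddCommGroup E]
    [InnerProductSpace ℝ E] (b : HilbertBasis ι ℝ E) (x : E) :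
    HasSum (fun i => ⟪x, b i⟫ ^ 2) (‖x‖ ^ 2) := by
  simpa only [real_inner_comm x, ← sq, real_inner_self_eq_norm_sq]
    using b.hasSum_inner_mul_inner x x

theorem IsRieszBasis.exists_norm_le_L2_inner {H : Type*} [NormedAddCommGroup H]
    [InnerProductSpace ℝ H] [CompleteSpace H] {w : ℕ → H} (hw : IsRieszBasis w) :
    ∃ C > (0 : ℝ), ∀ x : H, (Summable fun n => ⟪x, w n⟫ ^ 2) ∧
      ‖x‖ ≤ C * (∑' n, ⟪x, w n⟫ ^ 2) ^ (1 / 2 : ℝ) := by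
  obtain ⟨e, S, hS⟩ := hw
  set A := ContinuousLinearMap.adjoint (S : H →L[ℝ] H)
  set B := ContinuousLinearMap.adjoint (S.symm : H →L[ℝ] H)
  have hBA : ∀ x, B (A x) = x := fun x => by
    have : (S : H →L[ℝ] H) ∘L (S.symm : H →L[ℝ] H) = ContinuousLinearMap.id ℝ H := by
      ext y; simp
    simpa [B, A, this, ContinuousLinearMap.adjoint_id] using
      congrArg (· x) (ContinuousLinearMap.adjoint_comp (S : H →L[ℝ] H) (S.symm : H →L[ℝ] H)).symm
  refine ⟨‖B‖ + 1, by positivity, fun x => ?_⟩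
  have hcoord : ∀ n, ⟪A x, e n⟫ = ⟪x, w n⟫ := fun n => by
    rw [hS n, ContinuousLinearMap.adjoint_inner_left]; rfl
  have hparseval := e.hasSum_inner_sq (A x)
  simp only [hcoord] at hparseval
  refine ⟨hparseval.summable, ?_⟩
  rw [hparseval.tsum_eq, ← Real.sqrt_eq_rpow, Real.sqrt_sq (norm_nonneg _)]
  calc ‖x‖ = ‖B (A x)‖ := by rw [hBA]
    _ ≤ ‖B‖ * ‖A x‖ := B.le_opNorm _
    _ ≤ (‖B‖ + 1) * ‖A x‖ := by gcongr; linarith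

theorem reconstruction_stability_general {H : Type*} [NormedAddCommGroup H]
    [InnerProductSpace ℝ H] [CompleteSpace H]
    (v w : ℕ → H) (hw : IsRieszBasis w) (K : H) :
    ∃ C > (0:ℝ), ∀ Kt : H,
      Summable (fun n : ℕ => ‖v n - w n‖^2) →
      ‖K - Kt‖ ≤ C * (∑' n : ℕ, ‖v n - w n‖^2) ^ (1/2 : ℝ)
        + C * (∑' n : ℕ, |⟪K, v n⟫ - ⟪Kt, w n⟫|^2) ^ (1/2 : ℝ) := by
  obtain ⟨C, hC, hframe⟩ := hw.exists_norm_le_L2_inner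
  refine ⟨C * (‖K‖ + 1), by positivity, fun Kt hsum => ?_⟩
  obtain ⟨hc, hKt⟩ := hframe (K - Kt)
  obtain ⟨hd, hdK⟩ := L2_inner_le_norm_mul_L2 K hsum
  have hsplit : ∀ n, ⟪K - Kt, w n⟫ + ⟪K, v n - w n⟫ = ⟪K, v n⟫ - ⟪Kt, w n⟫ := fun n => by
    simp only [inner_sub_left, inner_sub_right]; ring
  have htri := Real.L2_le_L2_add_L2_add hc hd
  simp only [hsplit, ← sq_abs (⟪K, v _⟫ - ⟪Kt, w _⟫)] at htri
  set a := (∑' n, ‖v n - w n‖ ^ 2) ^ (1 / 2 : ℝ)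
  set b := (∑' n, |⟪K, v n⟫ - ⟪Kt, w n⟫| ^ 2) ^ (1 / 2 : ℝ)
  have ha : 0 ≤ a := by positivity
  calc ‖K - Kt‖ ≤ C * (‖K‖ * a + b) := hKt.trans (by gcongr; linarith)
    _ ≤ C * (‖K‖ + 1) * a + C * (‖K‖ + 1) * b := by
        have : 0 ≤ b := by positivity
        nlinarith [mul_nonneg hC.le ha, mul_nonneg hC.le this, norm_nonneg K]

theorem reconstruction_stability {H : Type*} [NormedAddCommGroup H]
    [InnerProductSpace ℝ H] [CompleteSpace H]
    (v w : ℕ → H) (hv : IsRieszBasis v) (hw : IsRieszBasis w) (K : H) :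
    ∃ C > (0:ℝ), ∀ Kt : H,
      Summable (fun n : ℕ => ‖v n - w n‖^2) →
      ‖K - Kt‖ ≤ C * (∑' n : ℕ, ‖v n - w n‖^2) ^ (1/2 : ℝ)
        + C * (∑' n : ℕ, |⟪K, v n⟫ - ⟪Kt, w n⟫|^2) ^ (1/2 : ℝ) :=
  reconstruction_stability_general v w hw K
end
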